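/- Let α be a composition that is both (i,z_1)-removable and (i,z_2)-removable. Then z_1 = z_2 if and only if J̃(i,z_1) = J̃(i,z_2), and z_1 > z_2 if and only if J̃(i,z_1) < J̃(i,z_2). -/

import Mathlib

/-- The matrix `c_{i,j}(α)` defined recursively in `j`. -/
def cmat (α : ℕ → ℕ) (i : ℕ) : ℕ → ℕ
  | 0 => 0
  | j + 1 =>
    if j + 1 ≤ i + 1 then 0
    else cmat α i j + if α j < α i - cmat α i j then 1 else 0

/-- `α` covers `α'` in position `(i,j)`: conditions (a1)–(a4). -/
def CoversAt (α α' : ℕ → ℕ) (i j : ℕ) : Prop :=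
  1 ≤ i ∧ i < j ∧
  α' i + 1 ≤ α i ∧
  α' j + α' i + 1 = α j + α i ∧
  (∀ k, k ≠ i → k ≠ j → α' k = α k) ∧
  cmat α i j = cmat α' i j ∧
  cmat α i j + α j = α' i

/-- `α` is `(i,z)`-removable. -/
def IsRemovable (α : ℕ → ℕ) (i z : ℕ) : Prop :=
  ∃ α' j, CoversAt α α' i j ∧ α' i + z = α i

/-- `J̃(i,z)`: the greatest `j > i` such that `c_{i,j}(α) = c_{i,j}(α̃)`,
where `α̃` is `α` with `α_i` replaced by `α_i - z`. -/
noncomputable def Jt (α : ℕ → ℕ) (i z : ℕ) : ℕ :=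
  sSup {j | i < j ∧ cmat α i j = cmat (Function.update α i (α i - z)) i j}

/-!
Write `f j = c_{i,j}(α)` and `g_z j = c_{i,j}(α̃)` with `α̃_i = α_i - z`. Along `j` the two
counters satisfy `g_z ≤ f ≤ g_z + z`, and once `g_z` falls behind `f` it never catches up, so
the agreement set of `f` and `g_z` is an initial segment of `(i, ∞)`. Lowering the pivot less
keeps the counters closer, so this segment shrinks as `z` grows. If `α` covers `α'` in position
`(i, j)` with `α'_i = α_i - z`, then `g_z` agrees with `f` at `j`, and the covering equation
`c_{i,j}(α) + α_j = α_i - z` forces `f` to step at `j` while `g_z` does not: hence `J̃(i,z) = j`.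
The same equation shows that distinct removable `z` have distinct covering positions, and the
segments are nested, so `z ↦ J̃(i,z)` is strictly antitone on removable `z`.
-/

open Function

lemma cmat_of_le (β : ℕ → ℕ) {i j : ℕ} (h : j ≤ i + 1) : cmat β i j = 0 := by
  cases j with
  | zero => rfl
  | succ j => simp [cmat, h]

lemma cmat_succ (β : ℕ → ℕ) {i j : ℕ} (h : i < j) :
    cmat β i (j + 1) = cmat β i j + if β j < β i - cmat β i j then 1 else 0 := by
  simp [cmat, show ¬ j + 1 ≤ i + 1 by omega]

lemma cmat_congr {β γ : ℕ → ℕ} {i : ℕ} (hi : β i = γ i) :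
    ∀ {j}, (∀ k, i < k → k < j → β k = γ k) → cmat β i j = cmat γ i j := by
  intro j
  induction j with
  | zero => intro _; rfl
  | succ j ih =>
    intro hagree
    by_cases h : j + 1 ≤ i + 1
    · rw [cmat_of_le _ h, cmat_of_le _ h]
    · have hij : i < j := by omega
      rw [cmat_succ _ hij, cmat_succ _ hij, ih (fun k hk hkj => hagree k hk (by omega)),
        hagree j hij (by omega), hi]

section Lowered

variable {α : ℕ → ℕ} {i : ℕ}

lemma cmat_update_succ (z : ℕ) {j : ℕ} (h : i < j) :
    cmat (update α i (α i - z)) i (j + 1) = cmat (update α i (α i - z)) i j +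
      if α j < α i - z - cmat (update α i (α i - z)) i j then 1 else 0 := by
  rw [cmat_succ _ h, update_of_ne (by omega), update_self]

lemma cmat_update_le_and_le (z : ℕ) {j : ℕ} (hj : i < j) :
    cmat (update α i (α i - z)) i j ≤ cmat α i j ∧
      cmat α i j ≤ cmat (update α i (α i - z)) i j + z := by
  induction j, hj using Nat.le_induction with
  | base => simp [cmat_of_le]
  | succ j hj ih =>
    rw [cmat_succ α hj, cmat_update_succ z hj]
    split_ifs <;> omega

lemma cmat_update_lt_of_le {z j j' : ℕ} (hj : i < j) (hjj' : j ≤ j')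
    (hlt : cmat (update α i (α i - z)) i j < cmat α i j) :
    cmat (update α i (α i - z)) i j' < cmat α i j' := by
  induction j', hjj' using Nat.le_induction with
  | base => exact hlt
  | succ j' hjj' ih =>
    have hij' : i < j' := by omega
    have := cmat_update_le_and_le (α := α) z hij'
    rw [cmat_succ α hij', cmat_update_succ z hij']
    split_ifs <;> omega

lemma cmat_eq_update_of_le {z j j' : ℕ} (hj : i < j) (hjj' : j ≤ j')
    (h : cmat α i j' = cmat (update α i (α i - z)) i j') :
    cmat α i j = cmat (update α i (α i - z)) i j := by
  by_contra hne
  have := cmat_update_le_and_le (α := α) z hj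
  have := cmat_update_lt_of_le (α := α) (z := z) hj hjj' (by omega)
  omega

lemma cmat_eq_update_of_eq_update {z₁ z₂ j : ℕ} (hz : z₂ ≤ z₁) (hj : i < j)
    (h : cmat α i j = cmat (update α i (α i - z₁)) i j) :
    cmat α i j = cmat (update α i (α i - z₂)) i j := by
  induction j, hj using Nat.le_induction with
  | base => simp [cmat_of_le]
  | succ j hj ih =>
    have h₁ := cmat_eq_update_of_le hj (Nat.le_succ j) h
    rw [cmat_succ α hj, cmat_update_succ z₁ hj, ← h₁] at h
    rw [cmat_succ α hj, cmat_update_succ z₂ hj, ← ih h₁]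
    split_ifs at h ⊢ <;> omega

lemma isGreatest_cmat_eq_update {z j : ℕ} (hz : 1 ≤ z) (hj : i < j)
    (heq : cmat α i j = cmat (update α i (α i - z)) i j)
    (hval : cmat α i j + α j + z = α i) :
    IsGreatest {j | i < j ∧ cmat α i j = cmat (update α i (α i - z)) i j} j := by
  refine ⟨⟨hj, heq⟩, fun j' ⟨hij', heq'⟩ => ?_⟩
  by_contra! hjj'
  have hstep : cmat (update α i (α i - z)) i (j + 1) < cmat α i (j + 1) := by
    rw [cmat_succ α hj, cmat_update_succ z hj]
    split_ifs <;> omega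
  have := cmat_update_lt_of_le (by omega) hjj' hstep
  omega

end Lowered

lemma CoversAt.cmat_eq_update {α α' : ℕ → ℕ} {i j z : ℕ} (hcov : CoversAt α α' i j)
    (hz : α' i + z = α i) :
    cmat α i j = cmat (update α i (α i - z)) i j := by
  obtain ⟨-, hij, -, -, hagree, hc, -⟩ := hcov
  rw [hc]
  refine cmat_congr (by rw [update_self]; omega) fun k hik hkj => ?_
  rw [hagree k (by omega) (by omega), update_of_ne (by omega)]

lemma CoversAt.isGreatest_cmat_eq_update {α α' : ℕ → ℕ} {i j z : ℕ} (hcov : CoversAt α α' i j)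
    (hz : α' i + z = α i) :
    IsGreatest {j | i < j ∧ cmat α i j = cmat (update α i (α i - z)) i j} j := by
  have heq := hcov.cmat_eq_update hz
  obtain ⟨-, hij, hlt, -, -, -, hval⟩ := hcov
  exact _root_.isGreatest_cmat_eq_update (by omega) hij heq (by omega)

lemma CoversAt.Jt_eq {α α' : ℕ → ℕ} {i j z : ℕ} (hcov : CoversAt α α' i j)
    (hz : α' i + z = α i) : Jt α i z = j :=
  (hcov.isGreatest_cmat_eq_update hz).csSup_eq

theorem Jt_strictAntiOn (α : ℕ → ℕ) (i : ℕ) : StrictAntiOn (Jt α i) {z | IsRemovable α i z} := by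
  rintro z₂ ⟨α₂, j₂, hcov₂, hz₂⟩ z₁ ⟨α₁, j₁, hcov₁, hz₁⟩ hlt
  rw [hcov₁.Jt_eq hz₁, hcov₂.Jt_eq hz₂]
  have hle : j₁ ≤ j₂ := (hcov₂.isGreatest_cmat_eq_update hz₂).2
    ⟨hcov₁.2.1, cmat_eq_update_of_eq_update hlt.le hcov₁.2.1 (hcov₁.cmat_eq_update hz₁)⟩
  obtain ⟨-, -, -, -, -, -, hval₁⟩ := hcov₁
  obtain ⟨-, -, -, -, -, -, hval₂⟩ := hcov₂
  have hne : j₁ ≠ j₂ := by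
    rintro rfl
    omega
  omega

theorem compare_removings_general (α : ℕ → ℕ)
    (i z₁ z₂ : ℕ)
    (h₁ : IsRemovable α i z₁) (h₂ : IsRemovable α i z₂) :
    (z₁ = z₂ ↔ Jt α i z₁ = Jt α i z₂) ∧
    (z₂ < z₁ ↔ Jt α i z₁ < Jt α i z₂) :=
  have hanti := Jt_strictAntiOn α i
  ⟨eq_comm.trans (hanti.eq_iff_eq h₁ h₂).symm, (hanti.lt_iff_gt h₁ h₂).symm⟩

/-- comparison of removings. -/
theorem compare_removings (α : ℕ → ℕ) (hbd : ∃ m, ∀ k, m < k → α k = 0)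
    (i z₁ z₂ : ℕ) (hi : 1 ≤ i)
    (hz₁ : 1 ≤ z₁) (hz₁' : z₁ ≤ α i) (hz₂ : 1 ≤ z₂) (hz₂' : z₂ ≤ α i)
    (h₁ : IsRemovable α i z₁) (h₂ : IsRemovable α i z₂) :
    (z₁ = z₂ ↔ Jt α i z₁ = Jt α i z₂) ∧
    (z₂ < z₁ ↔ Jt α i z₁ < Jt α i z₂) :=
  compare_removings_general α i z₁ z₂ h₁ h₂
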